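/- For identical stages (common v_ex and ε), among all choices of mass ratios μ_1,…,μ_n ∈ (1, 1/ε) satisfying Σ v_ex ln μ_k = Δv_req, the product ∏ μ_k(1-ε)/(1-μ_k ε) is minimized when all μ_k are equal. -/

import Mathlib

/-!
In the variables `x_k = log μ_k` the constraint fixes `∑ x_k`, and the logarithm of a stage's
lift-off-to-payload ratio is `x + log (1 - ε) - log (1 - ε eˣ)`. This is convex on
`x < -log ε` because `y ↦ log (1 - eʸ)` is concave, so Jensen's inequality shows that the sum of
the logarithms, hence the product, is smallest when all `x_k` equal their mean `Δv_req / (n v_ex)`.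
-/

open Real Set Finset

theorem concaveOn_log_one_sub_exp : ConcaveOn ℝ (Iio 0) fun x => log (1 - exp x) := by
  have hf : ConcaveOn ℝ (Iio 0) fun x => 1 - exp x :=
    (concaveOn_const 1 (convex_Iio 0)).sub (convexOn_exp.subset (subset_univ _) (convex_Iio 0))
  have hpos : (fun x => 1 - exp x) '' Iio 0 ⊆ Ioi 0 := by
    rintro _ ⟨x, hx, rfl⟩
    simpa using exp_lt_one_iff.2 hx
  have hconvex : Convex ℝ ((fun x => 1 - exp x) '' Iio 0) :=
    (isPreconnected_Iio.image _ (by fun_prop)).convex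
  exact (strictConcaveOn_log_Ioi.concaveOn.subset hpos hconvex).comp hf
    (strictMonoOn_log.monotoneOn.mono hpos)

theorem exp_mul_lt_one_of_lt_neg_log {ε x : ℝ} (hε : 0 < ε) (hx : x < -log ε) :
    exp x * ε < 1 := by
  rw [← exp_log hε, ← exp_add, exp_lt_one_iff]
  linarith

noncomputable def stageRatio (ε μ : ℝ) : ℝ := μ * (1 - ε) / (1 - μ * ε)

theorem convexOn_log_stageRatio_exp {ε : ℝ} (hε0 : 0 < ε) (hε1 : ε < 1) :
    ConvexOn ℝ (Iio (-log ε)) fun x => log (stageRatio ε (exp x)) := by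
  have hlin : ConvexOn ℝ (Iio (-log ε)) fun x => x + log (1 - ε) :=
    (convexOn_id (convex_Iio _)).add_const _
  have hconc : ConcaveOn ℝ (Iio (-log ε)) fun x => log (1 - exp (log ε + x)) := by
    have hdom : (fun z => log ε + z) ⁻¹' Iio 0 = Iio (-log ε) := by
      ext x
      simp only [Set.mem_Iio, Set.mem_preimage]
      constructor <;> intro h <;> linarith
    rw [← hdom]
    exact concaveOn_log_one_sub_exp.translate_right (log ε)
  refine (hlin.sub hconc).congr fun x hx => ?_
  have hlt := exp_mul_lt_one_of_lt_neg_log hε0 hx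
  rw [Pi.sub_apply, stageRatio, log_div (by positivity) (by linarith),
    log_mul (exp_pos x).ne' (by linarith), log_exp, exp_add, exp_log hε0, mul_comm ε]

theorem prod_apply_average_le_prod_of_convexOn_log {ι : Type*} {s : Finset ι} (hs : s.Nonempty)
    {D : Set ℝ} {f : ℝ → ℝ} (hf : ConvexOn ℝ D fun x => log (f x)) (hpos : ∀ x ∈ D, 0 < f x)
    {x : ι → ℝ} (hx : ∀ i ∈ s, x i ∈ D) :
    ∏ _i ∈ s, f ((∑ i ∈ s, x i) / #s) ≤ ∏ i ∈ s, f (x i) := by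
  have hcard : (0 : ℝ) < #s := by exact_mod_cast hs.card_pos
  have havg : ∑ i ∈ s, (#s : ℝ)⁻¹ • x i = (∑ i ∈ s, x i) / #s := by
    rw [← smul_sum, smul_eq_mul, inv_mul_eq_div]
  have hweights : ∑ _i ∈ s, (#s : ℝ)⁻¹ = 1 := by simp [hcard.ne']
  have hmem : (∑ i ∈ s, x i) / #s ∈ D :=
    havg ▸ hf.1.sum_mem (fun _ _ => by positivity) hweights hx
  have hjensen := hf.map_sum_le (w := fun _ => (#s : ℝ)⁻¹) (fun _ _ => by positivity) hweights hx
  rw [havg, ← smul_sum, smul_eq_mul, le_inv_mul_iff₀ hcard] at hjensen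
  rw [prod_const, ← log_le_log_iff (pow_pos (hpos _ hmem) _)
    (prod_pos fun i hi => hpos _ (hx i hi)), log_pow, log_prod fun i hi => (hpos _ (hx i hi)).ne']
  exact hjensen

theorem equal_stages_minimize_product_general (n : ℕ) (hn : 1 ≤ n) (vex ε Δvreq : ℝ)
    (hvex : 0 < vex) (hε0 : 0 < ε) (hε1 : ε < 1)
    (μ : Fin n → ℝ) (hμ : ∀ k, μ k ∈ Set.Ioo 1 (1 / ε))
    (hsum : ∑ k, vex * Real.log (μ k) = Δvreq) :
    (∏ _k : Fin n, Real.exp (Δvreq / (n * vex)) * (1 - ε) /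
        (1 - Real.exp (Δvreq / (n * vex)) * ε)) ≤
      ∏ k, μ k * (1 - ε) / (1 - μ k * ε) := by
  have hμpos : ∀ k, 0 < μ k := fun k => one_pos.trans (hμ k).1
  have hlog_mem : ∀ k, log (μ k) ∈ Iio (-log ε) := fun k => by
    rw [Set.mem_Iio, ← log_inv, ← one_div]
    exact log_lt_log (hμpos k) (hμ k).2
  have havg : (∑ k, log (μ k)) / #(univ : Finset (Fin n)) = Δvreq / (n * vex) := by
    rw [← hsum, ← mul_sum, card_univ, Fintype.card_fin]
    field_simp
  have hpos : ∀ x ∈ Iio (-log ε), 0 < stageRatio ε (exp x) := fun x hx =>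
    div_pos (mul_pos (exp_pos x) (sub_pos.2 hε1)) (sub_pos.2 (exp_mul_lt_one_of_lt_neg_log hε0 hx))
  have hjensen := prod_apply_average_le_prod_of_convexOn_log (s := (univ : Finset (Fin n)))
    ⟨⟨0, hn⟩, mem_univ _⟩ (convexOn_log_stageRatio_exp hε0 hε1) hpos fun k _ => hlog_mem k
  simpa only [stageRatio, havg, exp_log (hμpos _)] using hjensen

theorem equal_stages_minimize_product (n : ℕ) (hn : 1 ≤ n) (vex ε Δvreq : ℝ)
    (hvex : 0 < vex) (hε0 : 0 < ε) (hε1 : ε < 1)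
    (hΔ0 : 0 < Δvreq) (hΔ : Δvreq < n * vex * Real.log (1 / ε))
    (μ : Fin n → ℝ) (hμ : ∀ k, μ k ∈ Set.Ioo 1 (1 / ε))
    (hsum : ∑ k, vex * Real.log (μ k) = Δvreq) :
    (∏ _k : Fin n, Real.exp (Δvreq / (n * vex)) * (1 - ε) /
        (1 - Real.exp (Δvreq / (n * vex)) * ε)) ≤
      ∏ k, μ k * (1 - ε) / (1 - μ k * ε) :=
  equal_stages_minimize_product_general n hn vex ε Δvreq hvex hε0 hε1 μ hμ hsum
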